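/- Characterization of the f-ESS value for communication games (Theorem 4.1): Suppose f ∈ F_G satisfies (FA). Then a solution φ ∈ F_G satisfies (E), (FA), and (f-FDS) if and only if for every communication game (v,g) and every i ∈ N, φ_i(v,g) = f_i(v,g) + (1/n)·(v(N) − Σ_{k∈N} f_k(v,g)). -/

import Mathlib

/-!
If `f` and `φ` are fair, so is the surplus `φ - f`. Removing a link `ij` from `g` gives a
smaller network, so by well-founded induction on networks the surplus is equal for `i` and
`j` in `g - ij`, and fairness transports this equality to `g`.
Hence the surplus is constant along links, thus on each component, where it equals the
component average; `f`-FDS makes these averages agree across components, and efficiency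
pins the common value to `(v(N) - ∑ₖ fₖ) / n`.
-/

namespace Stmt3

/-- A TU-game on the player set `N`: a function on coalitions vanishing at `∅`. -/
abbrev Game (N : Type*) := {v : Finset N → ℝ // v ∅ = 0}

/-- A solution for communication games. -/
abbrev GSolution (N : Type*) := Game N → SimpleGraph N → N → ℝ

variable {N : Type*} [Fintype N] [DecidableEq N]

/-- The component of `N/g` containing the player `i`. -/
noncomputable def comp (g : SimpleGraph N) (i : N) : Finset N :=
  (Set.toFinite {j | g.Reachable i j}).toFinset

/-- Efficiency (E). -/
def Efficient (φ : GSolution N) : Prop :=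
  ∀ (v : Game N) (g : SimpleGraph N), ∑ i, φ v g i = v.1 Finset.univ

/-- Fairness (FA): severing a link `ij` changes the payoffs of `i` and `j`
by the same amount. -/
def FA (φ : GSolution N) : Prop :=
  ∀ (v : Game N) (g : SimpleGraph N) (i j : N), g.Adj i j →
    φ v g i - φ v (g.deleteEdges {s(i, j)}) i =
      φ v g j - φ v (g.deleteEdges {s(i, j)}) j

/-- `f`-fair distribution of the surplus (`f`-FDS). -/
def FDS (f φ : GSolution N) : Prop :=
  ∀ (v : Game N) (g : SimpleGraph N) (i j : N),
    (1 / ((comp g i).card : ℝ)) * ∑ k ∈ comp g i, (φ v g k - f v g k) =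
      (1 / ((comp g j).card : ℝ)) * ∑ k ∈ comp g j, (φ v g k - f v g k)

theorem _root_.SimpleGraph.deleteEdges_singleton_lt {V : Type*} {g : SimpleGraph V} {i j : V}
    (h : g.Adj i j) : g.deleteEdges {s(i, j)} < g :=
  (g.deleteEdges_le _).lt_of_ne fun heq => by
    rw [← heq] at h
    simp at h

theorem _root_.SimpleGraph.Reachable.eq_of_forall_adj_eq {V β : Type*} {g : SimpleGraph V}
    {x : V → β} (hx : ∀ i j, g.Adj i j → x i = x j) {i j : V} (h : g.Reachable i j) :
    x i = x j := by
  obtain ⟨w⟩ := h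
  induction w with
  | nil => rfl
  | cons hadj _ ih => exact (hx _ _ hadj).trans ih

theorem _root_.Finset.one_div_card_mul_sum_eq {ι : Type*} {s : Finset ι} {x : ι → ℝ} {c : ℝ}
    (hs : s.Nonempty) (h : ∀ k ∈ s, x k = c) : 1 / (s.card : ℝ) * ∑ k ∈ s, x k = c := by
  have hcard : (s.card : ℝ) ≠ 0 := by exact_mod_cast hs.card_pos.ne'
  rw [Finset.sum_congr rfl h, Finset.sum_const, nsmul_eq_mul, ← mul_assoc,
    one_div_mul_cancel hcard, one_mul]

omit [DecidableEq N] in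
theorem mem_comp_iff {g : SimpleGraph N} {i j : N} : j ∈ comp g i ↔ g.Reachable i j := by
  simp [comp]

omit [DecidableEq N] in
theorem comp_nonempty (g : SimpleGraph N) (i : N) : (comp g i).Nonempty :=
  ⟨i, mem_comp_iff.mpr .rfl⟩

omit [Fintype N] [DecidableEq N] in
theorem FA.of_eq_add_const {f φ : GSolution N} (hf : FA f) (c : Game N → SimpleGraph N → ℝ)
    (h : ∀ v g i, φ v g i = f v g i + c v g) : FA φ := by
  intro v g i j hij
  rw [h, h, h v g j, h _ _ j]
  linarith [hf v g i j hij]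

omit [DecidableEq N] in
theorem FDS.of_eq_add_const {f φ : GSolution N} (c : Game N → SimpleGraph N → ℝ)
    (h : ∀ v g i, φ v g i = f v g i + c v g) : FDS f φ := by
  intro v g i j
  have hsurplus : ∀ k, φ v g k - f v g k = c v g := fun k => sub_eq_of_eq_add' (h v g k)
  rw [Finset.one_div_card_mul_sum_eq (comp_nonempty g i) fun k _ => hsurplus k,
    Finset.one_div_card_mul_sum_eq (comp_nonempty g j) fun k _ => hsurplus k]

omit [DecidableEq N] in
theorem Efficient.of_eq_add_equal_share {f φ : GSolution N}
    (h : ∀ v g i, φ v g i = f v g i +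
      1 / (Fintype.card N : ℝ) * (v.1 Finset.univ - ∑ k, f v g k)) :
    Efficient φ := by
  intro v g
  rcases isEmpty_or_nonempty N with hN | hN
  · simp [Finset.univ_eq_empty, v.2]
  · have hn : (Fintype.card N : ℝ) ≠ 0 := by exact_mod_cast Fintype.card_ne_zero
    rw [Finset.sum_congr rfl fun i _ => h v g i, Finset.sum_add_distrib, Finset.sum_const,
      Finset.card_univ, nsmul_eq_mul, ← mul_assoc, mul_one_div_cancel hn, one_mul,
      add_sub_cancel]

omit [DecidableEq N] in
theorem surplus_eq_of_FA_of_FDS {f φ : GSolution N} (hf : FA f) (hφ : FA φ)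
    (hFDS : FDS f φ) (v : Game N) (g : SimpleGraph N) (i j : N) :
    φ v g i - f v g i = φ v g j - f v g j := by
  induction g using WellFoundedLT.induction generalizing i j with
  | ind g ih =>
    have hadj : ∀ k l, g.Adj k l → φ v g k - f v g k = φ v g l - f v g l := fun k l hkl => by
      linarith [hφ v g k l hkl, hf v g k l hkl, ih _ (g.deleteEdges_singleton_lt hkl) k l]
    have havg : ∀ k, 1 / ((comp g k).card : ℝ) * ∑ l ∈ comp g k, (φ v g l - f v g l) =
        φ v g k - f v g k := fun k =>
      Finset.one_div_card_mul_sum_eq (comp_nonempty g k) fun l hl =>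
        (SimpleGraph.Reachable.eq_of_forall_adj_eq hadj (mem_comp_iff.mp hl)).symm
    rw [← havg i, ← havg j]
    exact hFDS v g i j

theorem fESS_communication_general (f : GSolution N) (hf : FA f)
    (φ : GSolution N) :
    (Efficient φ ∧ FA φ ∧ FDS f φ) ↔
      (∀ (v : Game N) (g : SimpleGraph N) (i : N),
        φ v g i = f v g i +
          (1 / (Fintype.card N : ℝ)) * (v.1 Finset.univ - ∑ k, f v g k)) := by
  constructor
  · rintro ⟨hE, hφ, hFDS⟩ v g i
    have hsurplus : ∑ k, (φ v g k - f v g k) = v.1 Finset.univ - ∑ k, f v g k := by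
      rw [Finset.sum_sub_distrib, hE v g]
    have havg := Finset.one_div_card_mul_sum_eq ⟨i, Finset.mem_univ i⟩ fun k _ =>
      surplus_eq_of_FA_of_FDS hf hφ hFDS v g k i
    rw [hsurplus, Finset.card_univ] at havg
    linarith
  · intro h
    exact ⟨.of_eq_add_equal_share h, hf.of_eq_add_const _ h, .of_eq_add_const _ h⟩

/-- Theorem 4.1: if `f` satisfies (FA), then `φ` satisfies (E), (FA) and
(`f`-FDS) iff `φ` is the `f`-ESS value for communication games. -/
theorem fESS_communication [Nonempty N] (f : GSolution N) (hf : FA f)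
    (φ : GSolution N) :
    (Efficient φ ∧ FA φ ∧ FDS f φ) ↔
      (∀ (v : Game N) (g : SimpleGraph N) (i : N),
        φ v g i = f v g i +
          (1 / (Fintype.card N : ℝ)) * (v.1 Finset.univ - ∑ k, f v g k)) :=
  fESS_communication_general f hf φ

end Stmt3
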